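/- arXiv:1309.0680 — 2 statements merged into one kernel-verified Lean document; each statement's English description precedes it below -/
import Mathlib

section
/- Let G be a Berge graph with a 2-join (X1,X2) with split (X1,X2,A1,B1,A2,B2), and let i ∈ {1,2}. Then every induced antipath of length at least 2 whose interior vertices all lie in A_i and whose two ends lie outside A_i has even length; similarly with B_i in place of A_i. -/
open SimpleGraph

universe u

namespace BSP

variable {V : Type*}

/-- A walk is induced: any two adjacent vertices of its support are consecutive on it. -/
def IsInducedWalk (G : SimpleGraph V) {u v : V} (p : G.Walk u v) : Prop :=
  ∀ x ∈ p.support, ∀ y ∈ p.support, G.Adj x y → s(x, y) ∈ p.edges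

/-- An induced path. -/
def IsInducedPath (G : SimpleGraph V) {u v : V} (p : G.Walk u v) : Prop :=
  p.IsPath ∧ IsInducedWalk G p

/-- An induced cycle. -/
def IsInducedCycle (G : SimpleGraph V) {u : V} (p : G.Walk u u) : Prop :=
  p.IsCycle ∧ IsInducedWalk G p

/-- `G` has an odd hole: an induced odd cycle of length at least 5. -/
def HasOddHole (G : SimpleGraph V) : Prop :=
  ∃ (u : V) (p : G.Walk u u), IsInducedCycle G p ∧ Odd p.length ∧ 5 ≤ p.length

/-- A graph is Berge if neither it nor its complement has an odd hole. -/
def Berge (G : SimpleGraph V) : Prop := ¬ HasOddHole G ∧ ¬ HasOddHole Gᶜ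

/-- `x` is an interior vertex of the walk `p`. -/
def Interior {G : SimpleGraph V} {u v : V} (p : G.Walk u v) (x : V) : Prop :=
  x ∈ p.support ∧ x ≠ u ∧ x ≠ v

/-- A skew partition `(A, B)` of `G`. -/
def IsSkewPartition (G : SimpleGraph V) (A B : Set V) : Prop :=
  A.Nonempty ∧ B.Nonempty ∧ Disjoint A B ∧ A ∪ B = Set.univ ∧
  ¬ (G.induce A).Connected ∧ ¬ ((Gᶜ).induce B).Connected

/-- A balanced skew partition. -/
def IsBalancedSkewPartition (G : SimpleGraph V) (A B : Set V) : Prop :=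
  IsSkewPartition G A B ∧
  (∀ (x y : V) (p : G.Walk x y), IsInducedPath G p → 2 ≤ p.length →
     x ∈ B → y ∈ B → (∀ z, Interior p z → z ∈ A) → Even p.length) ∧
  (∀ (x y : V) (q : (Gᶜ).Walk x y), IsInducedPath Gᶜ q → 2 ≤ q.length →
     x ∈ A → y ∈ A → (∀ z, Interior q z → z ∈ B) → Even q.length)

def HasBalancedSkewPartition (G : SimpleGraph V) : Prop :=
  ∃ A B : Set V, IsBalancedSkewPartition G A B

def IsSkewCutset (G : SimpleGraph V) (B : Set V) : Prop :=
  IsSkewPartition G Bᶜ B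

def IsBalancedSkewCutset (G : SimpleGraph V) (B : Set V) : Prop :=
  IsBalancedSkewPartition G Bᶜ B

/-- `C` is a cutset of `G`. -/
def IsCutset (G : SimpleGraph V) (C : Set V) : Prop :=
  ¬ (G.induce (Cᶜ : Set V)).Connected

/-- A star: a set with a vertex adjacent to all the others in it. -/
def IsStar (G : SimpleGraph V) (B : Set V) : Prop :=
  ∃ x ∈ B, ∀ y ∈ B, y ≠ x → G.Adj x y

def HasStarCutset (G : SimpleGraph V) : Prop :=
  ∃ B : Set V, IsStar G B ∧ IsCutset G B

/-- A 2-join of `G` with split `(X1, X2, A1, B1, A2, B2)`. -/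
def IsTwoJoinSplit (G : SimpleGraph V) (X1 X2 A1 B1 A2 B2 : Set V) : Prop :=
  Disjoint X1 X2 ∧ X1 ∪ X2 = Set.univ ∧
  A1 ⊆ X1 ∧ B1 ⊆ X1 ∧ A2 ⊆ X2 ∧ B2 ⊆ X2 ∧
  Disjoint A1 B1 ∧ Disjoint A2 B2 ∧
  A1.Nonempty ∧ B1.Nonempty ∧ A2.Nonempty ∧ B2.Nonempty ∧
  (∀ a1 ∈ A1, ∀ a2 ∈ A2, G.Adj a1 a2) ∧
  (∀ b1 ∈ B1, ∀ b2 ∈ B2, G.Adj b1 b2) ∧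
  (∀ x ∈ X1, ∀ y ∈ X2, G.Adj x y → (x ∈ A1 ∧ y ∈ A2) ∨ (x ∈ B1 ∧ y ∈ B2))

/-- Reachability inside a set of vertices. -/
def ReachIn (G : SimpleGraph V) (S : Set V) (u v : V) : Prop :=
  ∃ p : G.Walk u v, ∀ x ∈ p.support, x ∈ S

/-- Every component of `G[X]` meets both `A` and `B`. -/
def SideConnected (G : SimpleGraph V) (X A B : Set V) : Prop :=
  ∀ v ∈ X, (∃ a ∈ A, ReachIn G X v a) ∧ (∃ b ∈ B, ReachIn G X v b)

def IsConnectedTwoJoin (G : SimpleGraph V) (X1 X2 A1 B1 A2 B2 : Set V) : Prop :=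
  IsTwoJoinSplit G X1 X2 A1 B1 A2 B2 ∧
  SideConnected G X1 A1 B1 ∧ SideConnected G X2 A2 B2

/-- `X` has at least 3 vertices and is not a path of length 2 from `A` to `B`
with interior in `X \ (A ∪ B)`. -/
def SideSubstantial (G : SimpleGraph V) (X A B : Set V) : Prop :=
  3 ≤ X.ncard ∧
  ¬ ∃ a ∈ A, ∃ b ∈ B, ∃ c ∈ X \ (A ∪ B),
      X = {a, c, b} ∧ G.Adj a c ∧ G.Adj c b ∧ ¬ G.Adj a b

def IsSubstantialTwoJoin (G : SimpleGraph V) (X1 X2 A1 B1 A2 B2 : Set V) : Prop :=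
  IsTwoJoinSplit G X1 X2 A1 B1 A2 B2 ∧
  SideSubstantial G X1 A1 B1 ∧ SideSubstantial G X2 A2 B2

def IsProperTwoJoin (G : SimpleGraph V) (X1 X2 A1 B1 A2 B2 : Set V) : Prop :=
  IsConnectedTwoJoin G X1 X2 A1 B1 A2 B2 ∧
  SideSubstantial G X1 A1 B1 ∧ SideSubstantial G X2 A2 B2

/-- A degenerate 2-join. -/
def IsDegenerate (G : SimpleGraph V) (X1 X2 A1 B1 A2 B2 : Set V) : Prop :=
  (∃ v ∈ A1, ∀ w ∈ X1 \ A1, ¬ G.Adj v w) ∨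
  (∃ v ∈ B1, ∀ w ∈ X1 \ B1, ¬ G.Adj v w) ∨
  (∃ v ∈ A2, ∀ w ∈ X2 \ A2, ¬ G.Adj v w) ∨
  (∃ v ∈ B2, ∀ w ∈ X2 \ B2, ¬ G.Adj v w) ∨
  IsSkewCutset G (A1 ∪ A2) ∨ IsSkewCutset G (B1 ∪ B2) ∨
  ¬ (SideConnected G X1 A1 B1 ∧ SideConnected G X2 A2 B2) ∨
  (∃ v ∈ A1, ∀ w ∈ B1, G.Adj v w) ∨ (∃ v ∈ B1, ∀ w ∈ A1, G.Adj v w) ∨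
  (∃ v ∈ A2, ∀ w ∈ B2, G.Adj v w) ∨ (∃ v ∈ B2, ∀ w ∈ A2, G.Adj v w) ∨
  (∃ v ∈ X1 \ (A1 ∪ B1), ∀ w ∈ A1 ∪ B1, G.Adj v w) ∨
  (∃ v ∈ X2 \ (A2 ∪ B2), ∀ w ∈ A2 ∪ B2, G.Adj v w)

/-- An induced path from `A` to `B` with no interior vertex in `A ∪ B`. -/
def CrossPath (G : SimpleGraph V) (A B : Set V) {u v : V} (p : G.Walk u v) : Prop :=
  IsInducedPath G p ∧ u ∈ A ∧ v ∈ B ∧ ∀ x, Interior p x → x ∉ A ∪ B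

/-- An induced path of length at least 2 with both ends in `S` and no interior vertex in `S`. -/
def OutgoingPath (G : SimpleGraph V) (S : Set V) {u v : V} (p : G.Walk u v) : Prop :=
  IsInducedPath G p ∧ 2 ≤ p.length ∧ u ∈ S ∧ v ∈ S ∧ ∀ x, Interior p x → x ∉ S

def claw : SimpleGraph (Fin 1 ⊕ Fin 3) := completeBipartiteGraph (Fin 1) (Fin 3)

def diamond : SimpleGraph (Fin 4) := (⊤ : SimpleGraph (Fin 4)).deleteEdges {s(0, 1)}

def ClawFree (G : SimpleGraph V) : Prop := IsEmpty (claw ↪g G)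

def DiamondFree (G : SimpleGraph V) : Prop := IsEmpty (diamond ↪g G)

def IsLineGraphOfBipartite {V : Type u} (G : SimpleGraph V) : Prop :=
  ∃ (W : Type u) (H : SimpleGraph W), H.Colorable 2 ∧ Nonempty (G ≃g H.lineGraph)

/-- Double split graph structure. -/
structure IsDoubleSplit (G : SimpleGraph V) (m n : ℕ)
    (a b : Fin m → V) (c d : Fin n → V) : Prop where
  hm : 2 ≤ m
  hn : 2 ≤ n
  inj : Function.Injective (Sum.elim (Sum.elim a b) (Sum.elim c d))
  cover : Set.range a ∪ Set.range b ∪ Set.range c ∪ Set.range d = Set.univ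
  hab : ∀ i, G.Adj (a i) (b i)
  habne : ∀ i i', i ≠ i' →
    ¬ G.Adj (a i) (a i') ∧ ¬ G.Adj (a i) (b i') ∧ ¬ G.Adj (b i) (b i')
  hcd : ∀ j, ¬ G.Adj (c j) (d j)
  hcdall : ∀ j j', j ≠ j' →
    G.Adj (c j) (c j') ∧ G.Adj (c j) (d j') ∧ G.Adj (d j) (d j')
  cross : ∀ i j,
    (G.Adj (a i) (c j) ∧ G.Adj (b i) (d j) ∧ ¬ G.Adj (a i) (d j) ∧ ¬ G.Adj (b i) (c j)) ∨
    (G.Adj (a i) (d j) ∧ G.Adj (b i) (c j) ∧ ¬ G.Adj (a i) (c j) ∧ ¬ G.Adj (b i) (d j))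

/-- Path-double split graph structure. -/
structure IsPathDoubleSplit (G : SimpleGraph V) (m n : ℕ)
    (a b : Fin m → V) (c d : Fin n → V) (E : Set V) : Prop where
  hm : 2 ≤ m
  hn : 2 ≤ n
  inj : Function.Injective (Sum.elim (Sum.elim a b) (Sum.elim c d))
  notinE : ∀ i, a i ∉ E ∧ b i ∉ E
  notinE' : ∀ j, c j ∉ E ∧ d j ∉ E
  cover : Set.range a ∪ Set.range b ∪ Set.range c ∪ Set.range d ∪ E = Set.univ
  hE : ∀ v ∈ E, (G.neighborSet v).ncard = 2 ∧
    ∃ (i : Fin m) (p : G.Walk (a i) (b i)), IsInducedPath G p ∧ Odd p.length ∧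
      (∀ x, Interior p x → x ∈ E) ∧ v ∈ p.support
  hpath : ∀ i, ∃! p : G.Walk (a i) (b i),
    IsInducedPath G p ∧ Odd p.length ∧ (∀ x, Interior p x → x ∈ E)
  habne : ∀ i i', i ≠ i' →
    ¬ G.Adj (a i) (a i') ∧ ¬ G.Adj (a i) (b i') ∧ ¬ G.Adj (b i) (b i')
  hcd : ∀ j, ¬ G.Adj (c j) (d j)
  hcdall : ∀ j j', j ≠ j' →
    G.Adj (c j) (c j') ∧ G.Adj (c j) (d j') ∧ G.Adj (d j) (d j')
  cross : ∀ i j,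
    (G.Adj (a i) (c j) ∧ G.Adj (b i) (d j) ∧ ¬ G.Adj (a i) (d j) ∧ ¬ G.Adj (b i) (c j)) ∨
    (G.Adj (a i) (d j) ∧ G.Adj (b i) (c j) ∧ ¬ G.Adj (a i) (c j) ∧ ¬ G.Adj (b i) (d j))

/-- Path-cobipartite graph. -/
def IsPathCobipartite (G : SimpleGraph V) : Prop :=
  Berge G ∧ ∃ A B P : Set V,
    Disjoint A B ∧ Disjoint A P ∧ Disjoint B P ∧ A ∪ B ∪ P = Set.univ ∧
    A.Nonempty ∧ B.Nonempty ∧ G.IsClique A ∧ G.IsClique B ∧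
    ∀ v ∈ P, (G.neighborSet v).ncard = 2 ∧
      ∃ a ∈ A, ∃ b ∈ B, ∃ p : G.Walk a b, IsInducedPath G p ∧ Odd p.length ∧
        Interior p v ∧ (∀ x, Interior p x → x ∈ P) ∧
        (∀ w, G.Adj a w → w ∈ A ∪ P) ∧ (∀ w, G.Adj b w → w ∈ B ∪ P) ∧
        (∀ (a' b' : V), a' ∈ A → b' ∈ B → ∀ p' : G.Walk a' b',
          IsInducedPath G p' → Odd p'.length → Interior p' v →
          (∀ x, Interior p' x → x ∈ P) →
          {x | x ∈ p'.support} = {x | x ∈ p.support})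

/-- `X` induces a path of `G` with one end in `A`, the other in `B` and interior
outside `A ∪ B`. -/
def PathSideOn (G : SimpleGraph V) (X A B : Set V) : Prop :=
  ∃ a ∈ A, ∃ b ∈ B, ∃ p : G.Walk a b, IsInducedPath G p ∧
    {x | x ∈ p.support} = X ∧ ∀ x, Interior p x → x ∉ A ∪ B

/-- The block of a 2-join: keep the side `X` (with attachments `A`, `B`) and replace the
other side by a path `p_0, …, p_k`, `p_0` complete to `A` and `p_k` complete to `B`. -/
def blockGraph (G : SimpleGraph V) (X A B : Set V) (k : ℕ) :
    SimpleGraph (↥X ⊕ Fin (k + 1)) where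
  Adj x y :=
    match x, y with
    | Sum.inl u, Sum.inl v => G.Adj u v
    | Sum.inl u, Sum.inr i => ((i : ℕ) = 0 ∧ (u : V) ∈ A) ∨ ((i : ℕ) = k ∧ (u : V) ∈ B)
    | Sum.inr i, Sum.inl u => ((i : ℕ) = 0 ∧ (u : V) ∈ A) ∨ ((i : ℕ) = k ∧ (u : V) ∈ B)
    | Sum.inr i, Sum.inr j => (i : ℕ) + 1 = (j : ℕ) ∨ (j : ℕ) + 1 = (i : ℕ)
  symm := by
    constructor
    rintro (u | i) (v | j) h
    · exact h.symm
    · exact h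
    · exact h
    · omega
  loopless := by
    constructor
    rintro (u | i) h
    · exact G.irrefl h
    · omega

/-- The graph `G'` obtained from a Bienstock graph `G` by adding two vertices
(`Sum.inr false` and `Sum.inr true`), each adjacent exactly to `u` and `s`. -/
def bienstockExt (G : SimpleGraph V) (u s : V) : SimpleGraph (V ⊕ Bool) where
  Adj x y :=
    match x, y with
    | Sum.inl p, Sum.inl q => G.Adj p q
    | Sum.inl p, Sum.inr _ => p = u ∨ p = s
    | Sum.inr _, Sum.inl q => q = u ∨ q = s
    | Sum.inr _, Sum.inr _ => False
  symm := by
    constructor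
    rintro (p | i) (q | j) h
    · exact h.symm
    · exact h
    · exact h
    · exact h
  loopless := by
    constructor
    rintro (p | i) h
    · exact G.irrefl h
    · exact h

end BSP

/-!
If the antipath `q` had odd length `≥ 3` with interior in `A₁`, each end of `q` would have, in `G`,
a neighbour and a non-neighbour in `A₁`. The 2-join structure then forces it into `X₁ \ A₁`, hence
anticomplete to `A₂`. A vertex of `A₂` is complete to `A₁`, so in `Gᶜ` it sees exactly the two ends
of `q` and closes `q` into an odd antihole of length `≥ 5`. The other three choices of the set are
the same statement for the 2-join with its sides or its `A`/`B` labels exchanged.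
-/

namespace BSP

open Walk

variable {V : Type*} {G : SimpleGraph V}

lemma IsInducedPath.reverse {u v : V} {q : G.Walk u v} (hq : IsInducedPath G q) :
    IsInducedPath G q.reverse := by
  refine ⟨hq.1.reverse, fun x hx y hy hxy => ?_⟩
  rw [support_reverse, List.mem_reverse] at hx hy
  simpa using hq.2 x hx y hy hxy

@[simp]
lemma interior_reverse_iff {u v x : V} {q : G.Walk u v} :
    Interior q.reverse x ↔ Interior q x := by
  simp only [Interior, support_reverse, List.mem_reverse]
  tauto

lemma IsInducedPath.exists_adj_not_adj_of_three_le {u v : V} {q : G.Walk u v}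
    (hq : IsInducedPath G q) (h3 : 3 ≤ q.length) :
    ∃ b c, Interior q b ∧ Interior q c ∧ G.Adj u b ∧ ¬ G.Adj u c := by
  obtain ⟨hpath, hind⟩ := hq
  match q, h3 with
  | @cons _ _ _ b _ hub (@cons _ _ _ c _ _ (.cons _ p)), _ =>
    have hv := p.end_mem_support
    simp only [cons_isPath_iff, support_cons, List.mem_cons, not_or] at hpath
    refine ⟨b, c, ⟨by simp, by grind, by grind⟩, ⟨by simp, by grind, by grind⟩, hub, fun huc => ?_⟩
    have huc_edge := hind u (by simp) c (by simp) huc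
    simp only [edges_cons, List.mem_cons, Sym2.eq_iff] at huc_edge
    grind [fst_mem_support_of_mem_edges, start_mem_support]

lemma IsInducedPath.isInducedCycle_cons_concat {u v t : V} {q : G.Walk u v}
    (hq : IsInducedPath G q) (huv : u ≠ v) (ht : t ∉ q.support) (htu : G.Adj t u)
    (hvt : G.Adj v t) (hint : ∀ x, Interior q x → ¬ G.Adj t x) :
    IsInducedCycle G (cons htu (q.concat hvt)) := by
  refine ⟨(cons_isCycle_iff _ _).mpr ⟨hq.1.concat ht hvt, ?_⟩, ?_⟩
  · rw [edges_concat, List.concat_eq_append, List.mem_append, List.mem_singleton, not_or]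
    exact ⟨fun h => ht (q.fst_mem_support_of_mem_edges h), by grind [Sym2.eq_iff]⟩
  · have hnbr : ∀ x ∈ q.support, G.Adj t x → s(t, x) ∈ (cons htu (q.concat hvt)).edges := by
      intro x hx htx
      by_cases hxu : x = u
      · simp [hxu]
      by_cases hxv : x = v
      · simp [hxv, Sym2.eq_swap]
      exact absurd htx (hint x ⟨hx, hxu, hxv⟩)
    intro x hx y hy hxy
    have hsupp : ∀ z, z ∈ (cons htu (q.concat hvt)).support ↔ z = t ∨ z ∈ q.support := by
      simp [or_comm]
    have hedges : q.edges ⊆ (cons htu (q.concat hvt)).edges := by simp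
    rw [hsupp] at hx hy
    rcases hx with rfl | hx <;> rcases hy with rfl | hy
    · exact (G.irrefl hxy).elim
    · exact hnbr y hy hxy
    · simpa [Sym2.eq_swap] using hnbr x hx hxy.symm
    · exact hedges (hq.2 x hx y hy hxy)

lemma IsInducedPath.even_length_of_not_hasOddHole (hG : ¬ HasOddHole G) {u v t : V}
    {q : G.Walk u v} (hq : IsInducedPath G q) (h2 : 2 ≤ q.length) (ht : t ∉ q.support)
    (htu : G.Adj t u) (hvt : G.Adj v t) (hint : ∀ x, Interior q x → ¬ G.Adj t x) :
    Even q.length := by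
  by_contra hodd
  have huv : u ≠ v := fun h => by
    have := (hq.1.nil_iff_eq.mpr h).length_eq_zero
    omega
  refine hG ⟨t, _, hq.isInducedCycle_cons_concat huv ht htu hvt hint, ?_, ?_⟩
  · simpa [Nat.odd_add_one, parity_simps] using hodd
  · simp only [length_cons, length_concat]
    have : q.length ≠ 2 := fun h => hodd (h ▸ even_two)
    omega

namespace IsTwoJoinSplit

variable {X1 X2 A1 B1 A2 B2 : Set V}

lemma comm (hJ : IsTwoJoinSplit G X1 X2 A1 B1 A2 B2) : IsTwoJoinSplit G X2 X1 A2 B2 A1 B1 := by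
  obtain ⟨hX, hcov, hA1, hB1, hA2, hB2, hAB1, hAB2, hA1ne, hB1ne, hA2ne, hB2ne, hA, hB, hcross⟩ :=
    hJ
  refine ⟨hX.symm, Set.union_comm X1 X2 ▸ hcov, hA2, hB2, hA1, hB1, hAB2, hAB1, hA2ne, hB2ne,
    hA1ne, hB1ne, fun a ha a' ha' => (hA a' ha' a ha).symm,
    fun b hb b' hb' => (hB b' hb' b hb).symm, fun x hx y hy hxy => ?_⟩
  rcases hcross y hy x hx hxy.symm with h | h
  · exact .inl h.symm
  · exact .inr h.symm

lemma swap (hJ : IsTwoJoinSplit G X1 X2 A1 B1 A2 B2) : IsTwoJoinSplit G X1 X2 B1 A1 B2 A2 := by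
  obtain ⟨hX, hcov, hA1, hB1, hA2, hB2, hAB1, hAB2, hA1ne, hB1ne, hA2ne, hB2ne, hA, hB, hcross⟩ :=
    hJ
  exact ⟨hX, hcov, hB1, hA1, hB2, hA2, hAB1.symm, hAB2.symm, hB1ne, hA1ne, hB2ne, hA2ne, hB, hA,
    fun x hx y hy hxy => (hcross x hx y hy hxy).symm⟩

lemma compl_adj_of_mixed (hJ : IsTwoJoinSplit G X1 X2 A1 B1 A2 B2) {x s s' t : V}
    (hx : x ∉ A1) (hs : s ∈ A1) (hxs : G.Adj x s) (hs' : s' ∈ A1) (hxs' : ¬ G.Adj x s')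
    (ht : t ∈ A2) : Gᶜ.Adj x t := by
  obtain ⟨hX, hcov, hA1, hB1, hA2, hB2, hAB1, hAB2, -, -, -, -, hA, -, hcross⟩ := hJ
  have hxX1 : x ∈ X1 := by
    rcases (hcov ▸ Set.mem_univ x : x ∈ X1 ∪ X2) with hx1 | hx2
    · exact hx1
    rcases hcross s (hA1 hs) x hx2 hxs.symm with ⟨-, hxA2⟩ | ⟨hsB1, -⟩
    · exact absurd (hA s' hs' x hxA2).symm hxs'
    · exact absurd hsB1 (Set.disjoint_left.mp hAB1 hs)
  refine (G.compl_adj x t).mpr ⟨fun h => Set.disjoint_left.mp hX hxX1 (h ▸ hA2 ht), fun hxt => ?_⟩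
  rcases hcross x hxX1 t (hA2 ht) hxt with ⟨hxA1, -⟩ | ⟨-, htB2⟩
  · exact hx hxA1
  · exact Set.disjoint_left.mp hAB2 ht htB2

lemma compl_adj_of_antipath_start (hJ : IsTwoJoinSplit G X1 X2 A1 B1 A2 B2) {u v t : V}
    {q : Gᶜ.Walk u v} (hq : IsInducedPath Gᶜ q) (h3 : 3 ≤ q.length) (hu : u ∉ A1)
    (hint : ∀ x, Interior q x → x ∈ A1) (ht : t ∈ A2) : Gᶜ.Adj u t := by
  obtain ⟨b, c, hb, hc, hub, huc⟩ := hq.exists_adj_not_adj_of_three_le h3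
  have huc' : G.Adj u c := by
    by_contra h
    exact huc ((G.compl_adj u c).mpr ⟨fun huc => hu (huc ▸ hint c hc), h⟩)
  exact hJ.compl_adj_of_mixed hu (hint c hc) huc' (hint b hb) ((G.compl_adj u b).mp hub).2 ht

lemma even_length_of_antipath_interior_subset (hJ : IsTwoJoinSplit G X1 X2 A1 B1 A2 B2)
    (hG : ¬ HasOddHole Gᶜ) {u v : V} {q : Gᶜ.Walk u v} (hq : IsInducedPath Gᶜ q)
    (h2 : 2 ≤ q.length) (hu : u ∉ A1) (hv : v ∉ A1) (hint : ∀ x, Interior q x → x ∈ A1) :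
    Even q.length := by
  rcases h2.eq_or_lt with hlen | h3
  · exact hlen ▸ even_two
  obtain ⟨hX, -, hA1, -, hA2, -, -, -, -, -, ⟨t, ht⟩, -, hA, -⟩ := id hJ
  have hut := hJ.compl_adj_of_antipath_start hq h3 hu hint ht
  have hvt := hJ.compl_adj_of_antipath_start hq.reverse (by rwa [length_reverse]) hv
    (by simpa using hint) ht
  refine hq.even_length_of_not_hasOddHole hG h3.le ?_ hut.symm hvt
    (fun x hx htx => ((G.compl_adj t x).mp htx).2 (hA x (hint x hx) t ht).symm)
  intro htq
  by_cases htu : t = u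
  · exact hut.ne htu.symm
  by_cases htv : t = v
  · exact hvt.ne htv.symm
  exact Set.disjoint_left.mp (hX.mono hA1 hA2) (hint t ⟨htq, htu, htv⟩) ht

end IsTwoJoinSplit

end BSP

/-- In a Berge graph with a 2-join, every antipath of length at least 2 whose
interior lies in `A_i` (resp. `B_i`) and whose ends lie outside has even length. -/
theorem two_join_antipath_even {V : Type*} (G : SimpleGraph V)
    (X1 X2 A1 B1 A2 B2 : Set V)
    (hBerge : BSP.Berge G)
    (hJ : BSP.IsTwoJoinSplit G X1 X2 A1 B1 A2 B2) :
    ∀ S : Set V, (S = A1 ∨ S = B1 ∨ S = A2 ∨ S = B2) →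
      ∀ (u v : V) (q : (Gᶜ).Walk u v), BSP.IsInducedPath Gᶜ q → 2 ≤ q.length →
        u ∉ S → v ∉ S → (∀ x, BSP.Interior q x → x ∈ S) → Even q.length := by
  intro S hS u v q hq h2 hu hv hint
  rcases hS with rfl | rfl | rfl | rfl
  · exact hJ.even_length_of_antipath_interior_subset hBerge.2 hq h2 hu hv hint
  · exact hJ.swap.even_length_of_antipath_interior_subset hBerge.2 hq h2 hu hv hint
  · exact hJ.comm.even_length_of_antipath_interior_subset hBerge.2 hq h2 hu hv hint
  · exact hJ.comm.swap.even_length_of_antipath_interior_subset hBerge.2 hq h2 hu hv hint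
end

section
/- Let G be a graph with a 2-join (X1,X2) with split (X1,X2,A1,B1,A2,B2), and let Q be an induced antipath of G of length at least 4 all of whose interior vertices lie in X2. Then there exists a vertex a ∈ A1 ∪ B1 such that V(Q) ⊆ X2 ∪ {a}. -/
open SimpleGraph

universe u

/-! Write the antipath as `u = q₀, q₁, …, qₙ = v` with `n ≥ 4`. Both ends are `G`-adjacent to
`q₂ ∈ X2`, so an end lying in `X1` belongs to `A1 ∪ B1`. The ends cannot both lie in `X1`: having
the common neighbour `q₂` they would lie on the same side (`A1` or `B1`) of the 2-join, and then
`v`, being adjacent to `q₁ ∈ X2`, would force `u` to be adjacent to `q₁` as well. -/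

namespace BSP

variable {V : Type*}

section InducedPath

variable {G : SimpleGraph V} {u v : V}

lemma interior_getVert {p : G.Walk u v} (hp : p.IsPath) {i : ℕ} (h0 : 0 < i)
    (hi : i < p.length) : Interior p (p.getVert i) :=
  ⟨p.getVert_mem_support i, by rw [Ne, hp.getVert_eq_start_iff hi.le]; omega,
    by rw [Ne, hp.getVert_eq_end_iff hi.le]; omega⟩

lemma forall_mem_support_of_interior {p : G.Walk u v} {P : V → Prop} (hu : P u) (hv : P v)
    (hint : ∀ x, Interior p x → P x) : ∀ x ∈ p.support, P x := by
  intro x hx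
  by_cases hxu : x = u
  · exact hxu ▸ hu
  by_cases hxv : x = v
  · exact hxv ▸ hv
  exact hint x ⟨hx, hxu, hxv⟩

lemma IsInducedPath.not_adj_getVert {p : G.Walk u v} (hp : IsInducedPath G p) {i j : ℕ}
    (hij : i + 2 ≤ j) (hj : j ≤ p.length) : ¬ G.Adj (p.getVert i) (p.getVert j) := by
  intro hadj
  obtain ⟨k, hk, hedge⟩ := p.mk_mem_edges_iff_exists.1 <|
    hp.2 _ (p.getVert_mem_support i) _ (p.getVert_mem_support j) hadj
  have hinj : ∀ {m n : ℕ}, m ≤ p.length → n ≤ p.length → p.getVert m = p.getVert n → m = n :=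
    fun hm hn h => hp.1.getVert_injOn hm hn h
  rcases Sym2.eq_iff.1 hedge with ⟨hki, hkj⟩ | ⟨hkj, hki⟩
  · have := hinj (by omega) (by omega) hki
    have := hinj (by omega) hj hkj
    omega
  · have := hinj (by omega) hj hkj
    have := hinj (by omega) (by omega) hki
    omega

lemma IsInducedPath.adj_getVert_of_compl {q : Gᶜ.Walk u v} (hq : IsInducedPath Gᶜ q)
    {i j : ℕ} (hij : i + 2 ≤ j) (hj : j ≤ q.length) : G.Adj (q.getVert i) (q.getVert j) := by
  have hne : q.getVert i ≠ q.getVert j := fun h => by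
    have := hq.1.getVert_injOn (by simp only [Set.mem_ofPred_eq]; omega) hj h
    omega
  by_contra hadj
  exact hq.not_adj_getVert hij hj ((G.compl_adj _ _).2 ⟨hne, hadj⟩)

end InducedPath

namespace IsTwoJoinSplit

variable {G : SimpleGraph V} {X1 X2 A1 B1 A2 B2 : Set V}

lemma mem_X2_of_not_mem_X1 (hJ : IsTwoJoinSplit G X1 X2 A1 B1 A2 B2) {x : V} (hx : x ∉ X1) :
    x ∈ X2 :=
  (hJ.2.1.symm ▸ Set.mem_univ x : x ∈ X1 ∪ X2).resolve_left hx

lemma mem_A1_union_B1_of_adj (hJ : IsTwoJoinSplit G X1 X2 A1 B1 A2 B2) {x y : V}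
    (hx : x ∈ X1) (hy : y ∈ X2) (hxy : G.Adj x y) : x ∈ A1 ∪ B1 := by
  obtain ⟨-, -, -, -, -, -, -, -, -, -, -, -, -, -, hcross⟩ := hJ
  rcases hcross x hx y hy hxy with ⟨h, -⟩ | ⟨h, -⟩
  exacts [Or.inl h, Or.inr h]

lemma adj_of_common_neighbor (hJ : IsTwoJoinSplit G X1 X2 A1 B1 A2 B2) {x x' y z : V}
    (hx : x ∈ X1) (hx' : x' ∈ X1) (hy : y ∈ X2) (hz : z ∈ X2)
    (hxy : G.Adj x y) (hx'y : G.Adj x' y) (hx'z : G.Adj x' z) : G.Adj x z := by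
  obtain ⟨-, -, -, -, -, -, hAB1, hAB2, -, -, -, -, hA, hB, hcross⟩ := hJ
  rcases hcross x hx y hy hxy with ⟨hxA, hyA⟩ | ⟨hxB, hyB⟩
  · rcases hcross x' hx' y hy hx'y with ⟨hx'A, -⟩ | ⟨-, hyB⟩
    · rcases hcross x' hx' z hz hx'z with ⟨-, hzA⟩ | ⟨hx'B, -⟩
      · exact hA x hxA z hzA
      · exact absurd hx'B (Set.disjoint_left.1 hAB1 hx'A)
    · exact absurd hyB (Set.disjoint_left.1 hAB2 hyA)
  · rcases hcross x' hx' y hy hx'y with ⟨-, hyA⟩ | ⟨hx'B, -⟩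
    · exact absurd hyB (Set.disjoint_left.1 hAB2 hyA)
    · rcases hcross x' hx' z hz hx'z with ⟨hx'A, -⟩ | ⟨-, hzB⟩
      · exact absurd hx'B (Set.disjoint_left.1 hAB1 hx'A)
      · exact hB x hxB z hzB

lemma exists_cover_of_common_neighbor (hJ : IsTwoJoinSplit G X1 X2 A1 B1 A2 B2) {u v y : V}
    (hy : y ∈ X2) (huy : G.Adj u y) (hvy : G.Adj v y) (huv : ¬ (u ∈ X1 ∧ v ∈ X1)) :
    ∃ a ∈ A1 ∪ B1, u ∈ X2 ∪ {a} ∧ v ∈ X2 ∪ {a} := by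
  by_cases hu : u ∈ X1
  · exact ⟨u, hJ.mem_A1_union_B1_of_adj hu hy huy, Or.inr rfl,
      Or.inl (hJ.mem_X2_of_not_mem_X1 fun hv => huv ⟨hu, hv⟩)⟩
  by_cases hv : v ∈ X1
  · exact ⟨v, hJ.mem_A1_union_B1_of_adj hv hy hvy, Or.inl (hJ.mem_X2_of_not_mem_X1 hu),
      Or.inr rfl⟩
  obtain ⟨a, ha⟩ : A1.Nonempty := hJ.2.2.2.2.2.2.2.2.1
  exact ⟨a, Or.inl ha, Or.inl (hJ.mem_X2_of_not_mem_X1 hu), Or.inl (hJ.mem_X2_of_not_mem_X1 hv)⟩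

end IsTwoJoinSplit

end BSP

/-- An antipath of length at least 4 with interior in `X2` has all its vertices
in `X2` except possibly one vertex of `A1 ∪ B1`. -/
theorem antipath_with_interior_in_X2 {V : Type*} (G : SimpleGraph V)
    (X1 X2 A1 B1 A2 B2 : Set V)
    (hJ : BSP.IsTwoJoinSplit G X1 X2 A1 B1 A2 B2)
    (u v : V) (q : (Gᶜ).Walk u v) (hq : BSP.IsInducedPath Gᶜ q)
    (hlen : 4 ≤ q.length)
    (hint : ∀ x, BSP.Interior q x → x ∈ X2) :
    ∃ a ∈ A1 ∪ B1, ∀ x ∈ q.support, x ∈ X2 ∪ {a} := by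
  have hq₁ : q.getVert 1 ∈ X2 := hint _ (BSP.interior_getVert hq.1 (by omega) (by omega))
  have hq₂ : q.getVert 2 ∈ X2 := hint _ (BSP.interior_getVert hq.1 (by omega) (by omega))
  have hu₂ : G.Adj u (q.getVert 2) := by
    simpa using hq.adj_getVert_of_compl (i := 0) (by omega) (by omega)
  have hv₂ : G.Adj v (q.getVert 2) := by
    simpa using (hq.adj_getVert_of_compl (j := q.length) (by omega) le_rfl).symm
  have hv₁ : G.Adj v (q.getVert 1) := by
    simpa using (hq.adj_getVert_of_compl (j := q.length) (by omega) le_rfl).symm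
  have hu₁ : ¬ G.Adj u (q.getVert 1) := by
    simpa using ((G.compl_adj _ _).1 (q.adj_getVert_succ (i := 0) (by omega))).2
  have hends : ¬ (u ∈ X1 ∧ v ∈ X1) := fun ⟨hu, hv⟩ =>
    hu₁ (hJ.adj_of_common_neighbor hu hv hq₂ hq₁ hu₂ hv₂ hv₁)
  obtain ⟨a, ha, hua, hva⟩ := hJ.exists_cover_of_common_neighbor hq₂ hu₂ hv₂ hends
  exact ⟨a, ha, BSP.forall_mem_support_of_interior hua hva fun x hx => Or.inl (hint x hx)⟩
end
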